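/- arXiv:math/0307285 — 4 statements merged into one kernel-verified Lean document; each statement's English description precedes it below -/
import Mathlib

section
/- Let E, F be Banach spaces, m ≥ 1, p ≥ 1, let S : Eᵐ → F be a continuous symmetric m-linear map, and let φ be a continuous linear functional on E. Define the symmetric (m+1)-linear map R by R(x₁,...,x_{m+1}) = (1/(m+1)) Σ_{i=1}^{m+1} φ(x_i) S(x₁,...,x̂_i,...,x_{m+1}) (where x̂_i means x_i is omitted). Suppose the operator x ↦ S(x, ·, ..., ·) from E to L(ᵐ⁻¹E;F) is absolutely p-summing, meaning there is a constant K such that (Σ_{j=1}^k ‖S(x_j, ·,...,·)‖^p)^{1/p} ≤ K sup_{ψ∈B_{E'}} (Σ_{j=1}^k |ψ(x_j)|^p)^{1/p} for all finite families (x_j). Then x ↦ R(x, ·, ..., ·) from E to L(ᵐE;F) is also absolutely p-summing, with constant at most (m/(m+1))‖φ‖K + (1/(m+1))‖S‖·π_p(φ), where π_p(φ) is the p-summing norm of φ. -/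
open scoped BigOperators

/-- if `S` is a continuous symmetric `m`-linear map (`m = m₀ + 1 ≥ 1`) whose
linearization `x ↦ S(x,·,…,·)` is absolutely `p`-summing with constant `K`, `φ ∈ E'` is
absolutely `p`-summing with constant `Kφ`, and `R` is the symmetrized product
`R(x₁,…,x_{m+1}) = (1/(m+1)) Σᵢ φ(xᵢ) S(x₁,…,x̂ᵢ,…,x_{m+1})`, then the linearization of `R`
is absolutely `p`-summing with constant at most `(m/(m+1))‖φ‖K + (1/(m+1))‖S‖Kφ`. -/
theorem stmt3
    {E F : Type} [NormedAddCommGroup E] [NormedSpace ℝ E] [CompleteSpace E]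
    [NormedAddCommGroup F] [NormedSpace ℝ F] [CompleteSpace F]
    (m₀ : ℕ) (p : ℝ) (hp : 1 ≤ p)
    (S : ContinuousMultilinearMap ℝ (fun _ : Fin (m₀ + 1) => E) F)
    (hSymm : ∀ (σ : Equiv.Perm (Fin (m₀ + 1))) (x : Fin (m₀ + 1) → E),
      S (fun i => x (σ i)) = S x)
    (φ : E →L[ℝ] ℝ)
    (R : ContinuousMultilinearMap ℝ (fun _ : Fin (m₀ + 2) => E) F)
    (hR : ∀ x : Fin (m₀ + 2) → E,
      R x = (1 / (m₀ + 2 : ℝ)) •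
        ∑ i : Fin (m₀ + 2), φ (x i) • S (fun j : Fin (m₀ + 1) => x (i.succAbove j)))
    (K Kφ : ℝ)
    -- `x ↦ S(x,·,…,·)` is absolutely `p`-summing with constant `K`
    (hS : ∀ (k : ℕ) (x : Fin k → E),
      (∑ j : Fin k, ‖continuousMultilinearCurryLeftEquiv ℝ (fun _ : Fin (m₀ + 1) => E) F S
        (x j)‖ ^ p) ^ (1 / p) ≤
      K * ⨆ ψ : {ψ : E →L[ℝ] ℝ // ‖ψ‖ ≤ 1},
        (∑ j : Fin k, |ψ.1 (x j)| ^ p) ^ (1 / p))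
    -- `φ` is absolutely `p`-summing with constant `Kφ`
    (hφ : ∀ (k : ℕ) (x : Fin k → E),
      (∑ j : Fin k, |φ (x j)| ^ p) ^ (1 / p) ≤
      Kφ * ⨆ ψ : {ψ : E →L[ℝ] ℝ // ‖ψ‖ ≤ 1},
        (∑ j : Fin k, |ψ.1 (x j)| ^ p) ^ (1 / p)) :
    ∀ (k : ℕ) (x : Fin k → E),
      (∑ j : Fin k, ‖continuousMultilinearCurryLeftEquiv ℝ (fun _ : Fin (m₀ + 2) => E) F R
        (x j)‖ ^ p) ^ (1 / p) ≤
      (((m₀ + 1 : ℝ) / (m₀ + 2 : ℝ)) * ‖φ‖ * K + (1 / (m₀ + 2 : ℝ)) * ‖S‖ * Kφ) *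
        ⨆ ψ : {ψ : E →L[ℝ] ℝ // ‖ψ‖ ≤ 1},
          (∑ j : Fin k, |ψ.1 (x j)| ^ p) ^ (1 / p) := by
  intro k x
  set c1 : ℝ := ((m₀ + 1 : ℝ) / (m₀ + 2 : ℝ)) * ‖φ‖ with hc1
  set c2 : ℝ := (1 / (m₀ + 2 : ℝ)) * ‖S‖ with hc2
  have hc1n : 0 ≤ c1 := by positivity
  have hc2n : 0 ≤ c2 := by positivity
  have hn : (0:ℝ) < (m₀ + 2 : ℝ) := by positivity
  -- pointwise bound on the norm of the linearization of R
  have key : ∀ a : E,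
      ‖continuousMultilinearCurryLeftEquiv ℝ (fun _ : Fin (m₀ + 2) => E) F R a‖ ≤
      c1 * ‖continuousMultilinearCurryLeftEquiv ℝ (fun _ : Fin (m₀ + 1) => E) F S a‖
        + c2 * |φ a| := by
    intro a
    apply ContinuousMultilinearMap.opNorm_le_bound
      (add_nonneg (mul_nonneg hc1n (norm_nonneg _)) (mul_nonneg hc2n (abs_nonneg _)))
    intro y
    have hy : (continuousMultilinearCurryLeftEquiv ℝ (fun _ : Fin (m₀ + 2) => E) F R a) y
        = R (Fin.cons a y) := rfl
    rw [hy, hR]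
    rw [Fin.sum_univ_succ]
    have h0 : (φ ((Fin.cons a y : Fin (m₀ + 2) → E) (0 : Fin (m₀ + 2)))) •
        S (fun j : Fin (m₀ + 1) => (Fin.cons a y : Fin (m₀ + 2) → E) ((0 : Fin (m₀ + 2)).succAbove j))
        = φ a • S y := by
      simp [Fin.succAbove_zero]
    have hj : ∀ i : Fin (m₀ + 1),
        (fun j : Fin (m₀ + 1) => (Fin.cons a y : Fin (m₀ + 2) → E) ((i.succ).succAbove j))
        = (Fin.cons a (fun j : Fin m₀ => y (i.succAbove j)) : Fin (m₀ + 1) → E) := by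
      intro i
      funext l
      refine Fin.cases ?_ ?_ l
      · simp
      · intro l'
        simp
    rw [h0]
    rw [norm_smul]
    have habs : ‖(1 / (m₀ + 2 : ℝ))‖ = 1 / (m₀ + 2 : ℝ) := by
      rw [Real.norm_eq_abs, abs_of_nonneg]; positivity
    rw [habs]
    have hterm : ∀ i : Fin (m₀ + 1),
        ‖φ ((Fin.cons a y : Fin (m₀ + 2) → E) i.succ) •
          S (fun j : Fin (m₀ + 1) => (Fin.cons a y : Fin (m₀ + 2) → E) ((i.succ).succAbove j))‖ ≤
        ‖φ‖ * ‖continuousMultilinearCurryLeftEquiv ℝ (fun _ : Fin (m₀ + 1) => E) F S a‖ *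
          ∏ l : Fin (m₀ + 1), ‖y l‖ := by
      intro i
      rw [hj i, norm_smul]
      have h1 : ‖S (Fin.cons a (fun j : Fin m₀ => y (i.succAbove j)))‖ ≤
          ‖continuousMultilinearCurryLeftEquiv ℝ (fun _ : Fin (m₀ + 1) => E) F S a‖ *
            ∏ j : Fin m₀, ‖y (i.succAbove j)‖ := by
        have := (continuousMultilinearCurryLeftEquiv ℝ (fun _ : Fin (m₀ + 1) => E) F S
          a).le_opNorm (fun j : Fin m₀ => y (i.succAbove j))
        simpa using this
      have h2 : ‖φ ((Fin.cons a y : Fin (m₀ + 2) → E) i.succ)‖ ≤ ‖φ‖ * ‖y i‖ := by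
        simpa using φ.le_opNorm (y i)
      calc ‖φ ((Fin.cons a y : Fin (m₀ + 2) → E) i.succ)‖ *
            ‖S (Fin.cons a (fun j : Fin m₀ => y (i.succAbove j)))‖
          ≤ (‖φ‖ * ‖y i‖) *
            (‖continuousMultilinearCurryLeftEquiv ℝ (fun _ : Fin (m₀ + 1) => E) F S a‖ *
              ∏ j : Fin m₀, ‖y (i.succAbove j)‖) := by
            apply mul_le_mul h2 h1 (norm_nonneg _) (by positivity)
        _ = ‖φ‖ * ‖continuousMultilinearCurryLeftEquiv ℝ (fun _ : Fin (m₀ + 1) => E) F S a‖ *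
              (‖y i‖ * ∏ j : Fin m₀, ‖y (i.succAbove j)‖) := by ring
        _ = ‖φ‖ * ‖continuousMultilinearCurryLeftEquiv ℝ (fun _ : Fin (m₀ + 1) => E) F S a‖ *
              ∏ l : Fin (m₀ + 1), ‖y l‖ := by
            rw [← Fin.prod_univ_succAbove (fun l => ‖y l‖) i]
    have h0n : ‖φ a • S y‖ ≤ |φ a| * (‖S‖ * ∏ l : Fin (m₀ + 1), ‖y l‖) := by
      rw [norm_smul, Real.norm_eq_abs]
      exact mul_le_mul_of_nonneg_left (S.le_opNorm y) (abs_nonneg _)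
    calc (1 / (m₀ + 2 : ℝ)) * ‖φ a • S y + ∑ i : Fin (m₀ + 1),
            φ ((Fin.cons a y : Fin (m₀ + 2) → E) i.succ) •
              S (fun j : Fin (m₀ + 1) => (Fin.cons a y : Fin (m₀ + 2) → E) ((i.succ).succAbove j))‖
        ≤ (1 / (m₀ + 2 : ℝ)) * (‖φ a • S y‖ + ∑ i : Fin (m₀ + 1),
            ‖φ ((Fin.cons a y : Fin (m₀ + 2) → E) i.succ) •
              S (fun j : Fin (m₀ + 1) => (Fin.cons a y : Fin (m₀ + 2) → E) ((i.succ).succAbove j))‖) := by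
          apply mul_le_mul_of_nonneg_left _ (by positivity)
          exact (norm_add_le _ _).trans (by gcongr; exact norm_sum_le _ _)
      _ ≤ (1 / (m₀ + 2 : ℝ)) * (|φ a| * (‖S‖ * ∏ l : Fin (m₀ + 1), ‖y l‖) +
            ∑ _i : Fin (m₀ + 1),
              ‖φ‖ * ‖continuousMultilinearCurryLeftEquiv ℝ (fun _ : Fin (m₀ + 1) => E) F S a‖ *
                ∏ l : Fin (m₀ + 1), ‖y l‖) := by
          apply mul_le_mul_of_nonneg_left _ (by positivity)
          exact add_le_add h0n (Finset.sum_le_sum fun i _ => hterm i)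
      _ = (c1 * ‖continuousMultilinearCurryLeftEquiv ℝ (fun _ : Fin (m₀ + 1) => E) F S a‖
            + c2 * |φ a|) * ∏ l : Fin (m₀ + 1), ‖y l‖ := by
          rw [Finset.sum_const, Finset.card_univ, Fintype.card_fin, hc1, hc2]
          field_simp
          ring
  -- now the ℓ_p estimate
  have hp0 : (0:ℝ) < p := lt_of_lt_of_le one_pos hp
  have hip : 0 ≤ 1 / p := by positivity
  set B : Fin k → ℝ := fun j =>
    c1 * ‖continuousMultilinearCurryLeftEquiv ℝ (fun _ : Fin (m₀ + 1) => E) F S (x j)‖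
  set C : Fin k → ℝ := fun j => c2 * |φ (x j)|
  have hBn : ∀ j, 0 ≤ B j := fun j => by positivity
  have hCn : ∀ j, 0 ≤ C j := fun j => by positivity
  have step1 : (∑ j : Fin k,
      ‖continuousMultilinearCurryLeftEquiv ℝ (fun _ : Fin (m₀ + 2) => E) F R (x j)‖ ^ p) ^ (1/p)
      ≤ (∑ j : Fin k, (B j + C j) ^ p) ^ (1/p) := by
    apply Real.rpow_le_rpow (Finset.sum_nonneg fun j _ => Real.rpow_nonneg (norm_nonneg _) p)
      _ hip
    exact Finset.sum_le_sum fun j _ =>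
      Real.rpow_le_rpow (norm_nonneg _) (key (x j)) (le_of_lt hp0)
  have step2 : (∑ j : Fin k, (B j + C j) ^ p) ^ (1/p)
      ≤ (∑ j : Fin k, B j ^ p) ^ (1/p) + (∑ j : Fin k, C j ^ p) ^ (1/p) :=
    Real.Lp_add_le_of_nonneg (s := Finset.univ) hp (fun j _ => hBn j) (fun j _ => hCn j)
  have pull : ∀ (c : ℝ) (_ : 0 ≤ c) (f : Fin k → ℝ) (_ : ∀ j, 0 ≤ f j),
      (∑ j : Fin k, (c * f j) ^ p) ^ (1/p) = c * (∑ j : Fin k, f j ^ p) ^ (1/p) := by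
    intro c hc f hf
    have : ∀ j : Fin k, (c * f j) ^ p = c ^ p * f j ^ p := fun j =>
      Real.mul_rpow hc (hf j)
    simp_rw [this, ← Finset.mul_sum]
    rw [Real.mul_rpow (Real.rpow_nonneg hc p)
      (Finset.sum_nonneg fun j _ => Real.rpow_nonneg (hf j) p),
      ← Real.rpow_mul hc, show p * (1/p) = 1 by field_simp, Real.rpow_one]
  have pullB : (∑ j : Fin k, B j ^ p) ^ (1/p)
      = c1 * (∑ j : Fin k,
        ‖continuousMultilinearCurryLeftEquiv ℝ (fun _ : Fin (m₀ + 1) => E) F S (x j)‖ ^ p) ^ (1/p) :=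
    pull c1 hc1n _ (fun j => norm_nonneg _)
  have pullC : (∑ j : Fin k, C j ^ p) ^ (1/p)
      = c2 * (∑ j : Fin k, |φ (x j)| ^ p) ^ (1/p) :=
    pull c2 hc2n _ (fun j => abs_nonneg _)
  calc (∑ j : Fin k,
      ‖continuousMultilinearCurryLeftEquiv ℝ (fun _ : Fin (m₀ + 2) => E) F R (x j)‖ ^ p) ^ (1/p)
      ≤ (∑ j : Fin k, B j ^ p) ^ (1/p) + (∑ j : Fin k, C j ^ p) ^ (1/p) := step1.trans step2
    _ ≤ c1 * (K * ⨆ ψ : {ψ : E →L[ℝ] ℝ // ‖ψ‖ ≤ 1},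
          (∑ j : Fin k, |ψ.1 (x j)| ^ p) ^ (1 / p))
        + c2 * (Kφ * ⨆ ψ : {ψ : E →L[ℝ] ℝ // ‖ψ‖ ≤ 1},
          (∑ j : Fin k, |ψ.1 (x j)| ^ p) ^ (1 / p)) := by
        rw [pullB, pullC]
        exact add_le_add (mul_le_mul_of_nonneg_left (hS k x) hc1n)
          (mul_le_mul_of_nonneg_left (hφ k x) hc2n)
    _ = (c1 * K + c2 * Kφ) * ⨆ ψ : {ψ : E →L[ℝ] ℝ // ‖ψ‖ ≤ 1},
          (∑ j : Fin k, |ψ.1 (x j)| ^ p) ^ (1 / p) := by ring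
end

section
/- Let 1/2 < α < 1 and let P̌ : ℓ₂ × ℓ₂ → ℝ be the bounded symmetric bilinear form P̌(x,y) = Σ_{j=1}^∞ x_j y_j / j^α. Then there is no constant C ≥ 0 such that (Σ_{j=1}^m |P̌(e_j,e_j)|^{1/2})² ≤ C · (sup_{ψ ∈ B_{ℓ₂'}} Σ_{j=1}^m |ψ(e_j)|)² for all m; in particular P̌ is not 1-dominated. Concretely: (Σ_{j=1}^m j^{-α/2})² ≥ m^{2-α}, while sup_{‖y‖_{ℓ₂}≤1} Σ_{j=1}^m |⟨y, e_j⟩| ≤ m^{1/2}, so the required inequality would force m^{2-α} ≤ C m, contradicting α < 1. -/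
open scoped BigOperators

/-- for `1/2 < α < 1`, the bilinear form `P̌(x,y) = Σ_j x_j y_j / j^α` on `ℓ₂`
(indices shifted by one) is not 1-dominated: there is no `C ≥ 0` with
`(Σ_{j<m} |P̌(e_j,e_j)|^{1/2})² ≤ C (sup_{ψ ∈ B_{ℓ₂'}} Σ_{j<m} |ψ(e_j)|)²` for all `m`.
Concretely, `(Σ_{j<m} (j+1)^{-α/2})² ≥ m^{2-α}` and the weak-ℓ₁ norm of `(e_j)_{j<m}` is at
most `m^{1/2}`. -/
theorem stmt7 (α : ℝ) (hα₁ : 1 / 2 < α) (hα₂ : α < 1)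
    (B : lp (fun _ : ℕ => ℝ) 2 →L[ℝ] lp (fun _ : ℕ => ℝ) 2 →L[ℝ] ℝ)
    (hB : ∀ x y : lp (fun _ : ℕ => ℝ) 2,
      B x y = ∑' j : ℕ, x j * y j / ((j : ℝ) + 1) ^ α) :
    (∀ m : ℕ, (m : ℝ) ^ (2 - α) ≤
        (∑ j ∈ Finset.range m, (((j : ℝ) + 1) ^ α)⁻¹ ^ ((1 : ℝ) / 2)) ^ 2) ∧
    (∀ m : ℕ,
      (⨆ ψ : {ψ : lp (fun _ : ℕ => ℝ) 2 →L[ℝ] ℝ // ‖ψ‖ ≤ 1},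
          ∑ j ∈ Finset.range m, |ψ.1 (lp.single 2 j 1)|) ≤ (m : ℝ) ^ ((1 : ℝ) / 2)) ∧
    ¬ ∃ C : ℝ, 0 ≤ C ∧ ∀ m : ℕ,
        (∑ j ∈ Finset.range m, |B (lp.single 2 j 1) (lp.single 2 j 1)| ^ ((1 : ℝ) / 2)) ^ 2 ≤
          C * (⨆ ψ : {ψ : lp (fun _ : ℕ => ℝ) 2 →L[ℝ] ℝ // ‖ψ‖ ≤ 1},
              ∑ j ∈ Finset.range m, |ψ.1 (lp.single 2 j 1)|) ^ 2 := by
  have hα0 : (0:ℝ) < α := by linarith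
  -- Part 1
  have h1 : ∀ m : ℕ, (m : ℝ) ^ (2 - α) ≤
      (∑ j ∈ Finset.range m, (((j : ℝ) + 1) ^ α)⁻¹ ^ ((1 : ℝ) / 2)) ^ 2 := by
    intro m
    rcases Nat.eq_zero_or_pos m with rfl | hm
    · simp [Real.zero_rpow (by linarith : (2:ℝ) - α ≠ 0)]
    have hm0 : (0:ℝ) < m := by exact_mod_cast hm
    have key : (m : ℝ) ^ (-(α * (1/2))) * m ≤
        ∑ j ∈ Finset.range m, (((j : ℝ) + 1) ^ α)⁻¹ ^ ((1 : ℝ) / 2) := by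
      have := Finset.card_nsmul_le_sum (Finset.range m)
        (fun j => (((j : ℝ) + 1) ^ α)⁻¹ ^ ((1 : ℝ) / 2)) ((m : ℝ) ^ (-(α * (1/2))))
        (fun j hj => by
          have hj' : (j : ℝ) + 1 ≤ m := by
            have h := Finset.mem_range.mp hj
            exact_mod_cast Nat.succ_le_of_lt h
          have hj0 : (0:ℝ) < (j : ℝ) + 1 := by positivity
          have : (((j : ℝ) + 1) ^ α)⁻¹ ^ ((1 : ℝ) / 2)
              = ((j : ℝ) + 1) ^ (-(α * (1/2))) := by
            rw [← Real.rpow_neg hj0.le, ← Real.rpow_mul hj0.le, neg_mul]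
          show (m:ℝ) ^ (-(α * (1/2))) ≤ (((j:ℝ)+1)^α)⁻¹ ^ ((1:ℝ)/2)
          rw [this]
          exact Real.rpow_le_rpow_of_nonpos hj0 hj'
            (by nlinarith : -(α * (1/2)) ≤ 0))
      simpa [Finset.card_range, nsmul_eq_mul, mul_comm] using this
    calc (m : ℝ) ^ (2 - α) = ((m : ℝ) ^ (-(α * (1/2))) * m) ^ 2 := by
          rw [mul_pow, ← Real.rpow_natCast ((m:ℝ) ^ (-(α * (1/2)))) 2,
            ← Real.rpow_natCast (m:ℝ) 2, ← Real.rpow_mul hm0.le,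
            ← Real.rpow_add hm0]
          congr 1
          push_cast
          ring
      _ ≤ _ := by
          apply pow_le_pow_left₀ (by positivity) key
  -- Part 2
  have hne : Nonempty {ψ : lp (fun _ : ℕ => ℝ) 2 →L[ℝ] ℝ // ‖ψ‖ ≤ 1} :=
    ⟨⟨0, by simp⟩⟩
  have h2 : ∀ m : ℕ, ∀ ψ : {ψ : lp (fun _ : ℕ => ℝ) 2 →L[ℝ] ℝ // ‖ψ‖ ≤ 1},
      ∑ j ∈ Finset.range m, |ψ.1 (lp.single 2 j 1)| ≤ (m : ℝ) ^ ((1 : ℝ) / 2) := by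
    intro m ⟨ψ, hψ⟩
    set c : ℕ → ℝ := fun j => if 0 ≤ ψ (lp.single 2 j 1) then 1 else -1 with hc
    set x : lp (fun _ : ℕ => ℝ) 2 := ∑ j ∈ Finset.range m, lp.single 2 j (c j) with hx
    have hxnorm : ‖x‖ = (m : ℝ) ^ ((1 : ℝ) / 2) := by
      have hp : (0:ℝ) < (2 : ENNReal).toReal := by norm_num
      have hnorm2 : ‖x‖ ^ ((2 : ENNReal).toReal) = (m : ℝ) := by
        rw [hx, lp.norm_sum_single hp c (Finset.range m)]
        have hcn : ∀ j ∈ Finset.range m, ‖c j‖ ^ (2 : ENNReal).toReal = 1 := by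
          intro j _
          have : ‖c j‖ = 1 := by
            rcases le_or_gt 0 (ψ (lp.single 2 j 1)) with h | h
            · simp [hc, h]
            · simp [hc, not_le.mpr h]
          rw [this, Real.one_rpow]
        rw [Finset.sum_congr rfl hcn]
        simp
      have ht : (2 : ENNReal).toReal = (2:ℝ) := by norm_num
      rw [ht] at hnorm2
      calc ‖x‖ = (‖x‖ ^ (2:ℝ)) ^ ((1:ℝ)/2) := by
            rw [← Real.rpow_mul (norm_nonneg x)]; norm_num
        _ = (m : ℝ) ^ ((1 : ℝ) / 2) := by rw [hnorm2]
    have hψx : ψ x = ∑ j ∈ Finset.range m, |ψ (lp.single 2 j 1)| := by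
      rw [hx, map_sum]
      refine Finset.sum_congr rfl fun j _ => ?_
      have : lp.single (E := fun _ : ℕ => ℝ) 2 j (c j) = c j • lp.single 2 j 1 := by
        rw [← lp.single_smul]
        congr 1
        simp [smul_eq_mul]
      rw [this, map_smul, smul_eq_mul]
      rcases le_or_gt 0 (ψ (lp.single 2 j 1)) with h | h
      · simp [hc, h, abs_of_nonneg h]
      · simp [hc, not_le.mpr h, abs_of_neg h]
    calc ∑ j ∈ Finset.range m, |ψ (lp.single 2 j 1)| = ψ x := hψx.symm
      _ ≤ ‖ψ x‖ := le_abs_self _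
      _ ≤ ‖ψ‖ * ‖x‖ := ψ.le_opNorm x
      _ ≤ 1 * ‖x‖ := mul_le_mul_of_nonneg_right hψ (norm_nonneg x)
      _ = (m : ℝ) ^ ((1 : ℝ) / 2) := by rw [one_mul, hxnorm]
  have h2' : ∀ m : ℕ,
      (⨆ ψ : {ψ : lp (fun _ : ℕ => ℝ) 2 →L[ℝ] ℝ // ‖ψ‖ ≤ 1},
          ∑ j ∈ Finset.range m, |ψ.1 (lp.single 2 j 1)|) ≤ (m : ℝ) ^ ((1 : ℝ) / 2) :=
    fun m => ciSup_le (h2 m)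
  refine ⟨h1, h2', ?_⟩
  -- Part 3
  rintro ⟨C, hC, hineq⟩
  -- B(e_j, e_j) = ((j+1)^α)⁻¹
  have hBe : ∀ j : ℕ, B (lp.single 2 j 1) (lp.single 2 j 1) = (((j : ℝ) + 1) ^ α)⁻¹ := by
    intro j
    rw [hB]
    rw [tsum_eq_single j]
    · rw [lp.single_apply_self]; ring
    · intro k hk
      rw [lp.single_apply_ne 2 j _ hk]
      ring
  -- choose m large
  set m : ℕ := max 1 ⌈(C + 1) ^ ((1 - α)⁻¹)⌉₊ with hmdef
  have hm1 : 1 ≤ m := le_max_left _ _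
  have hm0 : (0:ℝ) < m := by exact_mod_cast hm1
  have hmC : C + 1 ≤ (m : ℝ) ^ (1 - α) := by
    have h1' : ((C + 1) ^ ((1 - α)⁻¹) : ℝ) ≤ m := by
      calc ((C + 1) ^ ((1 - α)⁻¹) : ℝ) ≤ ⌈(C + 1) ^ ((1 - α)⁻¹)⌉₊ := Nat.le_ceil _
        _ ≤ m := by exact_mod_cast Nat.le_of_eq rfl |>.trans (le_max_right 1 _) |>.trans le_rfl
    have := Real.rpow_le_rpow (by positivity) h1' (by linarith : (0:ℝ) ≤ 1 - α)
    rwa [← Real.rpow_mul (by positivity), inv_mul_cancel₀ (by linarith : (1:ℝ) - α ≠ 0),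
      Real.rpow_one] at this
  -- sup bounds
  set S := (⨆ ψ : {ψ : lp (fun _ : ℕ => ℝ) 2 →L[ℝ] ℝ // ‖ψ‖ ≤ 1},
      ∑ j ∈ Finset.range m, |ψ.1 (lp.single 2 j 1)|) with hS
  have hS0 : 0 ≤ S := by
    have := le_ciSup (f := fun ψ : {ψ : lp (fun _ : ℕ => ℝ) 2 →L[ℝ] ℝ // ‖ψ‖ ≤ 1} =>
        ∑ j ∈ Finset.range m, |ψ.1 (lp.single 2 j 1)|)
      ⟨(m : ℝ) ^ ((1:ℝ)/2), by rintro _ ⟨ψ, rfl⟩; exact h2 m ψ⟩ ⟨0, by simp⟩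
    simpa using this
  have hSsq : S ^ 2 ≤ (m : ℝ) := by
    calc S ^ 2 ≤ ((m : ℝ) ^ ((1:ℝ)/2)) ^ 2 := pow_le_pow_left₀ hS0 (h2' m) 2
      _ = (m : ℝ) := by
        rw [← Real.rpow_natCast ((m:ℝ) ^ ((1:ℝ)/2)) 2, ← Real.rpow_mul hm0.le]
        norm_num
  -- final contradiction
  have hsum : (∑ j ∈ Finset.range m, |B (lp.single 2 j 1) (lp.single 2 j 1)| ^ ((1 : ℝ) / 2))
      = ∑ j ∈ Finset.range m, (((j : ℝ) + 1) ^ α)⁻¹ ^ ((1 : ℝ) / 2) := by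
    refine Finset.sum_congr rfl fun j _ => ?_
    rw [hBe j, abs_of_pos]
    positivity
  have hmain : (m : ℝ) ^ (2 - α) ≤ C * m := by
    calc (m : ℝ) ^ (2 - α) ≤
        (∑ j ∈ Finset.range m, (((j : ℝ) + 1) ^ α)⁻¹ ^ ((1 : ℝ) / 2)) ^ 2 := h1 m
      _ = (∑ j ∈ Finset.range m, |B (lp.single 2 j 1) (lp.single 2 j 1)| ^ ((1 : ℝ) / 2)) ^ 2 := by
          rw [hsum]
      _ ≤ C * S ^ 2 := hineq m
      _ ≤ C * m := by nlinarith
  have hlow : (C + 1) * m ≤ (m : ℝ) ^ (2 - α) := by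
    calc (C + 1) * m ≤ (m : ℝ) ^ (1 - α) * m := by nlinarith
      _ = (m : ℝ) ^ (2 - α) := by
        calc (m:ℝ)^(1-α) * (m:ℝ) = (m:ℝ)^(1-α) * (m:ℝ)^(1:ℝ) := by rw [Real.rpow_one]
          _ = (m:ℝ)^((1-α)+1) := (Real.rpow_add hm0 _ _).symm
          _ = (m:ℝ)^(2-α) := by ring_nf
  nlinarith
end

section
/- Let E, F be Banach spaces, m ≥ 1, and let P : E → F be an m-homogeneous polynomial satisfying the 1-domination inequality ‖P(x)‖ ≤ C (∫_{B_{E'}} |φ(x)| dμ(φ))^m for a probability measure μ on B_{E'}. Let ψ ∈ E' with ‖ψ‖ ≤ 1. Then the (m+1)-homogeneous polynomial Q(x) = ψ(x)·P(x) satisfies ‖Q(x)‖ ≤ C' (∫_{B_{E'}} |φ(x)| dν(φ))^{m+1} for some probability measure ν on B_{E'} and some constant C'; specifically one may take ν = (m μ + δ_ψ)/(m+1) and C' = C (m+1)^{m+1}/m^m. -/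
/-!
Write `A = ∫ |φ x| dμ` and `B = |ψ x|`, so that `∫ |φ x| dν = (m A + B)/(m+1)` for
`ν = (m μ + δ_ψ)/(m+1)`. Then `‖ψ x • P x‖ ≤ C B A^m`, and
`m^m B A^m = (m A)^m B ≤ (m A + B)^(m+1)`, which is the claimed bound with constant
`C (m+1)^(m+1) / m^m`.
-/

open MeasureTheory
open scoped ENNReal

namespace MeasureTheory

theorem isProbabilityMeasure_smul_add_smul {α : Type*} [MeasurableSpace α] {μ ν : Measure α}
    [IsProbabilityMeasure μ] [IsProbabilityMeasure ν] {a b : ℝ≥0∞} (hab : a + b = 1) :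
    IsProbabilityMeasure (a • μ + b • ν) :=
  ⟨by simp [hab]⟩

theorem integral_smul_add_smul_dirac {α G : Type*} [MeasurableSpace α]
    [MeasurableSingletonClass α] [NormedAddCommGroup G] [NormedSpace ℝ G] [CompleteSpace G]
    {μ : Measure α} {f : α → G} (hf : Integrable f μ) {a b : ℝ≥0∞} (ha : a ≠ ∞)
    (hb : b ≠ ∞) (y : α) :
    ∫ x, f x ∂(a • μ + b • Measure.dirac y) =
      a.toReal • ∫ x, f x ∂μ + b.toReal • f y := by
  rw [integral_add_measure (hf.smul_measure ha)
    ((integrable_dirac enorm_lt_top).smul_measure hb), integral_smul_measure,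
    integral_smul_measure, integral_dirac]

end MeasureTheory

theorem ENNReal.div_natCast_add_one_add_div_natCast_add_one (m : ℕ) :
    (m : ℝ≥0∞) / (m + 1) + 1 / (m + 1) = 1 := by
  rw [ENNReal.div_add_div_same, ENNReal.div_self (by simp) (by simp)]

theorem ENNReal.toReal_div_natCast_add_one (a : ℝ≥0∞) (m : ℕ) :
    (a / (m + 1)).toReal = a.toReal / (m + 1) := by
  rw [ENNReal.toReal_div]
  norm_cast

theorem mul_pow_le_weighted_mean_pow {A B : ℝ} (hA : 0 ≤ A) (hB : 0 ≤ B) (m : ℕ) :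
    B * A ^ m ≤ (m + 1) ^ (m + 1) / m ^ m * (m / (m + 1) * A + 1 / (m + 1) * B) ^ (m + 1) := by
  have hmA : 0 ≤ m * A := by positivity
  have hmm : (0 : ℝ) < m ^ m := by exact_mod_cast Nat.pow_self_pos
  have hmean : m / (m + 1) * A + 1 / (m + 1) * B = (m * A + B) / (m + 1) := by field_simp
  calc B * A ^ m = (m * A) ^ m * B / m ^ m := by rw [mul_pow]; field_simp
    _ ≤ (m * A + B) ^ m * (m * A + B) / m ^ m := by gcongr <;> linarith
    _ = _ := by rw [hmean, ← pow_succ, div_pow]; field_simp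

theorem stmt12_general
    {E F : Type} [NormedAddCommGroup E] [NormedSpace ℝ E]
    [NormedAddCommGroup F] [NormedSpace ℝ F]
    (m : ℕ) (hm : 1 ≤ m)
    (P : E → F)
    (C : ℝ) (hC : 0 ≤ C)
    [MeasurableSpace {φ : E →L[ℝ] ℝ // ‖φ‖ ≤ 1}]
    [MeasurableSingletonClass {φ : E →L[ℝ] ℝ // ‖φ‖ ≤ 1}]
    (μ : Measure {φ : E →L[ℝ] ℝ // ‖φ‖ ≤ 1}) [IsProbabilityMeasure μ]
    (hP : ∀ x : E, ‖P x‖ ≤ C * (∫ φ, |(φ.1 : E →L[ℝ] ℝ) x| ∂μ) ^ m)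
    (ψ : E →L[ℝ] ℝ) (hψ : ‖ψ‖ ≤ 1) :
    IsProbabilityMeasure
      (((m : ℝ≥0∞) / (m + 1)) • μ +
        ((1 : ℝ≥0∞) / (m + 1)) • Measure.dirac (⟨ψ, hψ⟩ : {φ : E →L[ℝ] ℝ // ‖φ‖ ≤ 1})) ∧
    ∀ x : E, ‖ψ x • P x‖ ≤
      (C * (m + 1 : ℝ) ^ (m + 1) / (m : ℝ) ^ m) *
        (∫ φ, |(φ.1 : E →L[ℝ] ℝ) x|
          ∂(((m : ℝ≥0∞) / (m + 1)) • μ +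
            ((1 : ℝ≥0∞) / (m + 1)) •
              Measure.dirac (⟨ψ, hψ⟩ : {φ : E →L[ℝ] ℝ // ‖φ‖ ≤ 1}))) ^ (m + 1) := by
  refine ⟨isProbabilityMeasure_smul_add_smul
    (ENNReal.div_natCast_add_one_add_div_natCast_add_one m), fun x => ?_⟩
  -- The σ-algebra on the dual ball is arbitrary, so `φ ↦ |φ x|` need not be integrable; then
  -- its integral is the junk value `0` and `hP` forces `P x = 0`.
  by_cases hf : Integrable (fun φ : {φ : E →L[ℝ] ℝ // ‖φ‖ ≤ 1} => |(φ.1 : E →L[ℝ] ℝ) x|) μ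
  · rw [integral_smul_add_smul_dirac hf (ENNReal.div_ne_top (by simp) (by simp))
      (ENNReal.div_ne_top (by simp) (by simp)), ENNReal.toReal_div_natCast_add_one,
      ENNReal.toReal_div_natCast_add_one, ENNReal.toReal_natCast, ENNReal.toReal_one,
      smul_eq_mul, smul_eq_mul]
    set A := ∫ φ, |(φ.1 : E →L[ℝ] ℝ) x| ∂μ
    have hA : 0 ≤ A := integral_nonneg fun _ => abs_nonneg _
    calc ‖ψ x • P x‖ = |ψ x| * ‖P x‖ := by rw [norm_smul, Real.norm_eq_abs]
      _ ≤ |ψ x| * (C * A ^ m) := by gcongr; exact hP x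
      _ = C * (|ψ x| * A ^ m) := by ring
      _ ≤ C * ((m + 1) ^ (m + 1) / m ^ m *
            (m / (m + 1) * A + 1 / (m + 1) * |ψ x|) ^ (m + 1)) :=
        mul_le_mul_of_nonneg_left (mul_pow_le_weighted_mean_pow hA (abs_nonneg _) m) hC
      _ = _ := by ring
  · have hPx : P x = 0 := norm_le_zero_iff.mp <| by
      simpa [integral_undef hf, Nat.one_le_iff_ne_zero.mp hm] using hP x
    rw [hPx, smul_zero, norm_zero]
    positivity

/-- if the `m`-homogeneous polynomial `P` (`m ≥ 1`) satisfies the 1-domination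
`‖P(x)‖ ≤ C (∫_{B_{E'}} |φ(x)| dμ)^m` and `ψ ∈ B_{E'}`, then `Q(x) = ψ(x)·P(x)` satisfies a
1-domination of degree `m+1` with `ν = (mμ + δ_ψ)/(m+1)` and `C' = C(m+1)^{m+1}/m^m`. -/
theorem stmt12
    {E F : Type} [NormedAddCommGroup E] [NormedSpace ℝ E] [CompleteSpace E]
    [NormedAddCommGroup F] [NormedSpace ℝ F] [CompleteSpace F]
    (m : ℕ) (hm : 1 ≤ m)
    (P : E → F) (T : ContinuousMultilinearMap ℝ (fun _ : Fin m => E) F)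
    (hPpoly : ∀ x : E, P x = T (fun _ => x))
    (C : ℝ) (hC : 0 ≤ C)
    [MeasurableSpace {φ : E →L[ℝ] ℝ // ‖φ‖ ≤ 1}]
    [MeasurableSingletonClass {φ : E →L[ℝ] ℝ // ‖φ‖ ≤ 1}]
    (μ : Measure {φ : E →L[ℝ] ℝ // ‖φ‖ ≤ 1}) [IsProbabilityMeasure μ]
    (hP : ∀ x : E, ‖P x‖ ≤ C * (∫ φ, |(φ.1 : E →L[ℝ] ℝ) x| ∂μ) ^ m)
    (ψ : E →L[ℝ] ℝ) (hψ : ‖ψ‖ ≤ 1) :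
    IsProbabilityMeasure
      (((m : ℝ≥0∞) / (m + 1)) • μ +
        ((1 : ℝ≥0∞) / (m + 1)) • Measure.dirac (⟨ψ, hψ⟩ : {φ : E →L[ℝ] ℝ // ‖φ‖ ≤ 1})) ∧
    ∀ x : E, ‖ψ x • P x‖ ≤
      (C * (m + 1 : ℝ) ^ (m + 1) / (m : ℝ) ^ m) *
        (∫ φ, |(φ.1 : E →L[ℝ] ℝ) x|
          ∂(((m : ℝ≥0∞) / (m + 1)) • μ +
            ((1 : ℝ≥0∞) / (m + 1)) •
              Measure.dirac (⟨ψ, hψ⟩ : {φ : E →L[ℝ] ℝ // ‖φ‖ ≤ 1}))) ^ (m + 1) :=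
  stmt12_general m hm P C hC μ hP ψ hψ
end

section
/- Let E, F be Banach spaces, n ≥ 2, and let T : Eⁿ → F be a continuous symmetric n-linear map such that the associated polynomial P(x) = T(x,...,x) is integral with constant C (i.e., |Σ_s ⟨ω_s, P(x_s)⟩| ≤ C sup_{ψ∈B_{E'}} ‖Σ_s ψ(x_s)ⁿ ω_s‖ for all finite families). Then T is integral as a multilinear map: there exists C' ≥ 0 (depending on C and n via the polarization formula, e.g. C' = C·nⁿ/n!) with |Σ_s ⟨ω_s, T(x_s^{(1)},...,x_s^{(n)})⟩| ≤ C' sup_{ψ₁,...,ψₙ ∈ B_{E'}} ‖Σ_s ψ₁(x_s^{(1)})⋯ψₙ(x_s^{(n)}) ω_s‖ for all finite families with all ‖x_s^{(j)}‖ ≤ 1. -/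
open scoped BigOperators

noncomputable def sg (b : Bool) : ℝ := if b then 1 else -1

lemma sg_pow_succ_sum (m : ℕ) : (∑ b : Bool, sg b ^ (m + 1)) = if Odd m then 2 else 0 := by
  rcases Nat.even_or_odd m with h | h
  · have : ¬ Odd m := Nat.not_odd_iff_even.mpr h
    simp [sg, this, (Even.add_one h).neg_one_pow]
  · have he : Even (m+1) := Odd.add_one h
    simp [sg, h, he.neg_one_pow]

lemma sum_sg (n : ℕ) (f : Fin n → Fin n) :
    (∑ ε : Fin n → Bool, (∏ j, sg (ε j)) * ∏ i, sg (ε (f i))) =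
      if Function.Bijective f then (2:ℝ)^n else 0 := by
  classical
  set m : Fin n → ℕ := fun j => (Finset.univ.filter fun i => f i = j).card with hm
  have hsum_m : (∑ j, m j) = n := by
    have h := Finset.card_eq_sum_card_fiberwise
      (s := (Finset.univ : Finset (Fin n))) (t := Finset.univ) (f := f)
      (fun x _ => Finset.mem_univ (f x))
    simpa [m] using h.symm
  have hprod : ∀ ε : Fin n → Bool, (∏ i, sg (ε (f i))) = ∏ j, sg (ε j) ^ m j := by
    intro ε
    rw [← Finset.prod_fiberwise_of_maps_to (fun x _ => Finset.mem_univ (f x)) (fun i => sg (ε (f i)))]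
    refine Finset.prod_congr rfl fun j _ => ?_
    rw [Finset.prod_congr rfl (fun i hi => by
      rw [(Finset.mem_filter.1 hi).2]), Finset.prod_const]
  have hstep : (∑ ε : Fin n → Bool, (∏ j, sg (ε j)) * ∏ i, sg (ε (f i)))
      = ∏ j, (if Odd (m j) then (2:ℝ) else 0) := by
    calc (∑ ε : Fin n → Bool, (∏ j, sg (ε j)) * ∏ i, sg (ε (f i)))
        = ∑ ε : Fin n → Bool, ∏ j, sg (ε j) ^ (m j + 1) := by
          refine Finset.sum_congr rfl fun ε _ => ?_
          rw [hprod ε, ← Finset.prod_mul_distrib]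
          refine Finset.prod_congr rfl fun j _ => ?_
          rw [pow_succ, mul_comm]
      _ = ∏ j, ∑ b : Bool, sg b ^ (m j + 1) := by
          rw [Finset.prod_univ_sum]
          rw [← Fintype.piFinset_univ]
      _ = ∏ j, (if Odd (m j) then (2:ℝ) else 0) :=
          Finset.prod_congr rfl fun j _ => sg_pow_succ_sum (m j)
  rw [hstep]
  by_cases hf : Function.Bijective f
  · have h1 : ∀ j, m j = 1 := by
      intro j
      obtain ⟨i, hi⟩ := hf.surjective j
      have hfib : (Finset.univ.filter fun a => f a = j) = {i} := by
        ext a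
        simp only [Finset.mem_filter, Finset.mem_univ, true_and, Finset.mem_singleton]
        constructor
        · intro h; exact hf.injective (h.trans hi.symm)
        · rintro rfl; exact hi
      simp [m, hfib]
    rw [if_pos hf]
    simp [h1]
  · have hodd : ∃ j, ¬ Odd (m j) := by
      by_contra h
      push_neg at h
      have h1 : ∀ j, 1 ≤ m j := fun j => (h j).pos
      have hall : ∀ j, m j = 1 := by
        have := (Finset.sum_eq_sum_iff_of_le (s := Finset.univ) (f := fun _ => 1) (g := m)
          (fun i _ => h1 i)).mp ?_
        · exact fun j => (this j (Finset.mem_univ j)).symm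
        · simp [hsum_m]
      have hinj : Function.Injective f := by
        intro a b hab
        have ha : a ∈ Finset.univ.filter fun i => f i = f b := by simp [hab]
        have hb : b ∈ Finset.univ.filter fun i => f i = f b := by simp
        exact Finset.card_le_one.mp (le_of_eq (hall (f b))) a ha b hb
      exact hf (Finite.injective_iff_bijective.mp hinj)
    obtain ⟨j, hj⟩ := hodd
    rw [if_neg hf]
    exact Finset.prod_eq_zero (Finset.mem_univ j) (if_neg hj)

lemma polarization {E F : Type} [AddCommGroup E] [Module ℝ E] [AddCommGroup F] [Module ℝ F]
    (n : ℕ) (T : MultilinearMap ℝ (fun _ : Fin n => E) F)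
    (hSymm : ∀ (σ : Equiv.Perm (Fin n)) (x : Fin n → E), T (fun i => x (σ i)) = T x)
    (x : Fin n → E) :
    (∑ ε : Fin n → Bool, (∏ j, sg (ε j)) • T (fun _ => ∑ j, sg (ε j) • x j))
      = ((2^n * n.factorial : ℕ) : ℝ) • T x := by
  classical
  have hdiag : ∀ ε : Fin n → Bool,
      T (fun _ => ∑ j, sg (ε j) • x j)
        = ∑ r : Fin n → Fin n, (∏ i, sg (ε (r i))) • T (fun i => x (r i)) := by
    intro ε
    rw [MultilinearMap.map_sum T (fun _ j => sg (ε j) • x j)]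
    exact Finset.sum_congr rfl fun r _ => MultilinearMap.map_smul_univ T _ _
  calc (∑ ε : Fin n → Bool, (∏ j, sg (ε j)) • T (fun _ => ∑ j, sg (ε j) • x j))
      = ∑ ε : Fin n → Bool, ∑ r : Fin n → Fin n,
          ((∏ j, sg (ε j)) * ∏ i, sg (ε (r i))) • T (fun i => x (r i)) := by
        refine Finset.sum_congr rfl fun ε _ => ?_
        rw [hdiag ε, Finset.smul_sum]
        exact Finset.sum_congr rfl fun r _ => smul_smul _ _ _
    _ = ∑ r : Fin n → Fin n, ∑ ε : Fin n → Bool,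
          ((∏ j, sg (ε j)) * ∏ i, sg (ε (r i))) • T (fun i => x (r i)) :=
        Finset.sum_comm
    _ = ∑ r : Fin n → Fin n,
          (if Function.Bijective r then (2:ℝ)^n else 0) • T (fun i => x (r i)) := by
        refine Finset.sum_congr rfl fun r _ => ?_
        rw [← Finset.sum_smul, sum_sg]
    _ = ∑ r ∈ Finset.univ.filter (fun r : Fin n → Fin n => Function.Bijective r),
          (2:ℝ)^n • T (fun i => x (r i)) := by
        rw [Finset.sum_filter]
        refine Finset.sum_congr rfl fun r _ => ?_
        split <;> simp
    _ = ∑ σ : Equiv.Perm (Fin n), (2:ℝ)^n • T (fun i => x (σ i)) := by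
        refine Finset.sum_bij' (fun r hr => Equiv.ofBijective r (by simpa using hr))
          (fun σ _ => (⇑σ : Fin n → Fin n)) ?_ ?_ ?_ ?_ ?_
        · intro a ha; exact Finset.mem_univ _
        · intro σ _; exact Finset.mem_filter.2 ⟨Finset.mem_univ _, σ.bijective⟩
        · intro a ha; rfl
        · intro σ _; exact Equiv.ext fun a => rfl
        · intro a ha; rfl
    _ = ((2^n * n.factorial : ℕ) : ℝ) • T x := by
        simp only [hSymm, Finset.sum_const, Finset.card_univ, Fintype.card_perm,
          Fintype.card_fin]
        rw [← Nat.cast_smul_eq_nsmul ℝ, smul_smul]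
        congr 1
        push_cast
        ring

lemma scalar_polarization {E : Type} [NormedAddCommGroup E] [NormedSpace ℝ E]
    (n : ℕ) (ψ : E →L[ℝ] ℝ) (x : Fin n → E) :
    (∑ ε : Fin n → Bool, (∏ j, sg (ε j)) * (ψ (∑ j, sg (ε j) • x j)) ^ n)
      = ((2^n * n.factorial : ℕ) : ℝ) * ∏ j, ψ (x j) := by
  classical
  let S : MultilinearMap ℝ (fun _ : Fin n => E) ℝ :=
    (MultilinearMap.mkPiAlgebra ℝ (Fin n) ℝ).compLinearMap (fun _ => (ψ : E →ₗ[ℝ] ℝ))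
  have hS : ∀ y : Fin n → E, S y = ∏ i, ψ (y i) := fun y => by
    simp [S]
  have hSymmS : ∀ (σ : Equiv.Perm (Fin n)) (y : Fin n → E),
      S (fun i => y (σ i)) = S y := by
    intro σ y
    rw [hS, hS]
    exact Equiv.prod_comp σ (fun i => ψ (y i))
  have h := polarization n S hSymmS x
  simp only [hS, Finset.prod_const, Finset.card_univ, Fintype.card_fin,
    smul_eq_mul] at h
  exact h

/-- if `T` is a continuous symmetric `n`-linear map (`n = n₀ + 2 ≥ 2`) whose
associated polynomial `P(x) = T(x,…,x)` is integral with constant `C`, then `T` is integral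
as a multilinear map on families from the unit ball, with some constant `C' ≥ 0` (depending
on `C` and `n` via the polarization formula). -/
theorem stmt18
    {E F : Type} [NormedAddCommGroup E] [NormedSpace ℝ E] [CompleteSpace E]
    [NormedAddCommGroup F] [NormedSpace ℝ F] [CompleteSpace F]
    (n₀ : ℕ)
    (T : ContinuousMultilinearMap ℝ (fun _ : Fin (n₀ + 2) => E) F)
    (hSymm : ∀ (σ : Equiv.Perm (Fin (n₀ + 2))) (x : Fin (n₀ + 2) → E),
      T (fun i => x (σ i)) = T x)
    (C : ℝ) (hC : 0 ≤ C)
    (hP : ∀ (k : ℕ) (x : Fin k → E) (ω : Fin k → (F →L[ℝ] ℝ)),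
      |∑ s : Fin k, ω s (T (fun _ => x s))| ≤
        C * ⨆ ψ : {ψ : E →L[ℝ] ℝ // ‖ψ‖ ≤ 1},
          ‖∑ s : Fin k, (ψ.1 (x s)) ^ (n₀ + 2) • ω s‖) :
    ∃ C' : ℝ, 0 ≤ C' ∧
      ∀ (k : ℕ) (x : Fin k → Fin (n₀ + 2) → E), (∀ s j, ‖x s j‖ ≤ 1) →
        ∀ ω : Fin k → (F →L[ℝ] ℝ),
          |∑ s : Fin k, ω s (T (x s))| ≤
            C' * ⨆ ψ : Fin (n₀ + 2) → {ψ : E →L[ℝ] ℝ // ‖ψ‖ ≤ 1},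
              ‖∑ s : Fin k, (∏ j : Fin (n₀ + 2), (ψ j).1 (x s j)) • ω s‖ := by
  classical
  refine ⟨C, hC, ?_⟩
  intro k x hx ω
  set κ : ℝ := ((2^(n₀+2) * (n₀+2).factorial : ℕ) : ℝ) with hκdef
  have hκpos : 0 < κ := by
    rw [hκdef]
    exact_mod_cast Nat.pos_of_ne_zero (by positivity)
  have hκ0 : κ ≠ 0 := ne_of_gt hκpos
  have hcard : Fintype.card (Fin k × (Fin (n₀+2) → Bool)) = k * 2^(n₀+2) := by
    simp [Fintype.card_fun]
  let e : (Fin k × (Fin (n₀+2) → Bool)) ≃ Fin (k * 2^(n₀+2)) :=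
    Fintype.equivFinOfCardEq hcard
  let x' : Fin (k * 2^(n₀+2)) → E :=
    fun t => ∑ j, sg ((e.symm t).2 j) • x (e.symm t).1 j
  let ω' : Fin (k * 2^(n₀+2)) → (F →L[ℝ] ℝ) :=
    fun t => (κ⁻¹ * ∏ j, sg ((e.symm t).2 j)) • ω (e.symm t).1
  have key := hP (k * 2^(n₀+2)) x' ω'
  -- identity A
  have hA : (∑ t, ω' t (T (fun _ => x' t))) = ∑ s, ω s (T (x s)) := by
    rw [← Equiv.sum_comp e (fun t => ω' t (T (fun _ => x' t))), Fintype.sum_prod_type]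
    refine Finset.sum_congr rfl fun s _ => ?_
    have hpol : (∑ ε : Fin (n₀+2) → Bool,
        (∏ j, sg (ε j)) • T (fun _ => ∑ j, sg (ε j) • x s j)) = κ • T (x s) :=
      polarization (n₀+2) T.toMultilinearMap (fun σ y => hSymm σ y) (x s)
    calc (∑ ε : Fin (n₀+2) → Bool, ω' (e (s, ε)) (T (fun _ => x' (e (s, ε)))))
        = ∑ ε : Fin (n₀+2) → Bool,
            κ⁻¹ * ((∏ j, sg (ε j)) * ω s (T (fun _ => ∑ j, sg (ε j) • x s j))) := by
          refine Finset.sum_congr rfl fun ε _ => ?_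
          simp only [x', ω', Equiv.symm_apply_apply, ContinuousLinearMap.smul_apply,
            smul_eq_mul]
          ring
      _ = κ⁻¹ * ω s (∑ ε : Fin (n₀+2) → Bool,
            (∏ j, sg (ε j)) • T (fun _ => ∑ j, sg (ε j) • x s j)) := by
          rw [map_sum, Finset.mul_sum]
          refine Finset.sum_congr rfl fun ε _ => ?_
          rw [map_smul, smul_eq_mul]
      _ = ω s (T (x s)) := by
          rw [hpol, map_smul, smul_eq_mul, ← mul_assoc, inv_mul_cancel₀ hκ0, one_mul]
  -- identity B
  have hB : ∀ ψ : {ψ : E →L[ℝ] ℝ // ‖ψ‖ ≤ 1},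
      (∑ t, (ψ.1 (x' t)) ^ (n₀+2) • ω' t) = ∑ s, (∏ j, ψ.1 (x s j)) • ω s := by
    intro ψ
    rw [← Equiv.sum_comp e (fun t => (ψ.1 (x' t)) ^ (n₀+2) • ω' t), Fintype.sum_prod_type]
    refine Finset.sum_congr rfl fun s _ => ?_
    have hspol := scalar_polarization (n₀+2) ψ.1 (x s)
    calc (∑ ε : Fin (n₀+2) → Bool, (ψ.1 (x' (e (s, ε)))) ^ (n₀+2) • ω' (e (s, ε)))
        = (κ⁻¹ * ∑ ε : Fin (n₀+2) → Bool,
            (∏ j, sg (ε j)) * (ψ.1 (∑ j, sg (ε j) • x s j)) ^ (n₀+2)) • ω s := by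
          rw [Finset.mul_sum, Finset.sum_smul]
          refine Finset.sum_congr rfl fun ε _ => ?_
          simp only [x', ω', Equiv.symm_apply_apply, smul_smul]
          congr 1
          ring
      _ = (∏ j, ψ.1 (x s j)) • ω s := by
          rw [hspol, ← mul_assoc, inv_mul_cancel₀ hκ0, one_mul]
  rw [hA] at key
  have hsup : (⨆ ψ : {ψ : E →L[ℝ] ℝ // ‖ψ‖ ≤ 1},
      ‖∑ t, (ψ.1 (x' t)) ^ (n₀+2) • ω' t‖)
      = ⨆ ψ : {ψ : E →L[ℝ] ℝ // ‖ψ‖ ≤ 1}, ‖∑ s, (∏ j, ψ.1 (x s j)) • ω s‖ :=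
    iSup_congr fun ψ => by rw [hB ψ]
  rw [hsup] at key
  refine key.trans (mul_le_mul_of_nonneg_left ?_ hC)
  have hNE : Nonempty {ψ : E →L[ℝ] ℝ // ‖ψ‖ ≤ 1} := ⟨⟨0, by simp⟩⟩
  have hbdd : BddAbove (Set.range fun Ψ : Fin (n₀+2) → {ψ : E →L[ℝ] ℝ // ‖ψ‖ ≤ 1} =>
      ‖∑ s, (∏ j, (Ψ j).1 (x s j)) • ω s‖) := by
    refine ⟨∑ s, ‖ω s‖, ?_⟩
    rintro _ ⟨Ψ, rfl⟩
    refine (norm_sum_le _ _).trans (Finset.sum_le_sum fun s _ => ?_)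
    refine le_trans (le_of_eq (norm_smul (∏ j, (Ψ j).1 (x s j)) (ω s))) ?_
    have h1 : ‖∏ j, (Ψ j).1 (x s j)‖ ≤ 1 := by
      rw [Real.norm_eq_abs, Finset.abs_prod]
      refine Finset.prod_le_one (fun j _ => abs_nonneg _) (fun j _ => ?_)
      calc |(Ψ j).1 (x s j)| ≤ ‖(Ψ j).1‖ * ‖x s j‖ := (Ψ j).1.le_opNorm _
        _ ≤ 1 * 1 := mul_le_mul (Ψ j).2 (hx s j) (norm_nonneg _) zero_le_one
        _ = 1 := one_mul 1
    calc ‖∏ j, (Ψ j).1 (x s j)‖ * ‖ω s‖ ≤ 1 * ‖ω s‖ :=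
          mul_le_mul_of_nonneg_right h1 (norm_nonneg _)
      _ = ‖ω s‖ := one_mul _
  exact ciSup_le fun ψ => le_ciSup hbdd (fun _ => ψ)
end
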